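/- Let K be a number field, d ≥ 2, A, B ∈ K* with B/A a root of unity, k, ℓ ≥ 1, and α, β ∈ K* with (α^k/β^ℓ)^(d^r) = B/A for some r ≥ 1. Let φ be the d-th power map on P², P = [α, β, 1], and V the curve A X^k = B Y^ℓ in P². Then φ^r(P) ∈ V, and if i ≥ 0 and q ≥ 1 are such that φ^(i+q)(V) = φ^i(V), then φ^(i+r+qj)(P) ∈ φ^i(V) for all j ≥ 0; in particular, if P is not preperiodic, the intersection O_φ(P) ∩ φ^i(V) is infinite. -/
import Mathlib


/-- Let `φ` be the `d`-th power map on `P²`, `P = [α, β, 1]` with `α, β ∈ K*`, and `V` the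
curve `A X^k = B Y^ℓ` with `B/A` a root of unity and `(α^k/β^ℓ)^{d^r} = B/A` for some `r ≥ 1`.
Then `φ^r(P) ∈ V` (i.e. `A (α^{d^r})^k = B (β^{d^r})^ℓ`); and if `i ≥ 0`, `q ≥ 1` satisfy
`φ^{i+q}(V) = φ^i(V)` (i.e. the coefficient pairs agree up to a nonzero scalar `c`), then
`φ^{i+r+qj}(P) ∈ φ^i(V)` for all `j ≥ 0`; in particular, if `P` is not preperiodic then the
intersection `O_φ(P) ∩ φ^i(V)` (orbit points identified with affine pairs) is infinite. -/
theorem orbit_meets_periodic_curve (K : Type*) [Field K] [NumberField K]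
    (d k l r : ℕ) (hd : 2 ≤ d) (hk : 0 < k) (hl : 0 < l) (hr : 1 ≤ r)
    (A B α β : K) (hA : A ≠ 0) (hB : B ≠ 0) (hα : α ≠ 0) (hβ : β ≠ 0)
    (hroot : ∃ m : ℕ, 0 < m ∧ (B / A) ^ m = 1)
    (hrel : (α ^ k / β ^ l) ^ d ^ r = B / A) :
    A * (α ^ d ^ r) ^ k = B * (β ^ d ^ r) ^ l ∧
    ∀ i q : ℕ, 1 ≤ q →
      (∃ c : K, c ≠ 0 ∧ A ^ d ^ (i + q) = c * A ^ d ^ i ∧ B ^ d ^ (i + q) = c * B ^ d ^ i) →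
      (∀ j : ℕ, A ^ d ^ i * (α ^ d ^ (i + r + q * j)) ^ k
          = B ^ d ^ i * (β ^ d ^ (i + r + q * j)) ^ l) ∧
      ((¬ ∃ m n : ℕ, m < n ∧ (α ^ d ^ n, β ^ d ^ n) = ((α ^ d ^ m, β ^ d ^ m) : K × K)) →
        {p : K × K | (∃ n : ℕ, p = (α ^ d ^ n, β ^ d ^ n)) ∧
          A ^ d ^ i * p.1 ^ k = B ^ d ^ i * p.2 ^ l}.Infinite) := by
  have hβl : (β ^ l) ^ d ^ r ≠ 0 := pow_ne_zero _ (pow_ne_zero _ hβ)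
  have key : A * (α ^ d ^ r) ^ k = B * (β ^ d ^ r) ^ l := by
    rw [div_pow, div_eq_div_iff hβl hA] at hrel
    calc A * (α ^ d ^ r) ^ k = (α ^ k) ^ d ^ r * A := by
          rw [← pow_mul, ← pow_mul, Nat.mul_comm]; ring
      _ = B * (β ^ l) ^ d ^ r := hrel
      _ = B * (β ^ d ^ r) ^ l := by rw [← pow_mul, ← pow_mul, Nat.mul_comm]
  refine ⟨key, ?_⟩
  intro i q hq ⟨c, hc, hAc, hBc⟩
  have hcj : ∀ j : ℕ, ∃ cj : K, cj ≠ 0 ∧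
      A ^ d ^ (i + q * j) = cj * A ^ d ^ i ∧ B ^ d ^ (i + q * j) = cj * B ^ d ^ i := by
    intro j
    induction j with
    | zero => exact ⟨1, one_ne_zero, by simp, by simp⟩
    | succ j ih =>
      obtain ⟨cj, hcj0, hAj, hBj⟩ := ih
      refine ⟨cj ^ d ^ q * c, mul_ne_zero (pow_ne_zero _ hcj0) hc, ?_, ?_⟩
      · have e : i + q * (j + 1) = (i + q * j) + q := by ring
        calc A ^ d ^ (i + q * (j + 1)) = (A ^ d ^ (i + q * j)) ^ d ^ q := by
              rw [e, pow_add, pow_mul]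
          _ = cj ^ d ^ q * (A ^ d ^ i) ^ d ^ q := by rw [hAj, mul_pow]
          _ = cj ^ d ^ q * A ^ d ^ (i + q) := by rw [← pow_mul, ← pow_add]
          _ = cj ^ d ^ q * c * A ^ d ^ i := by rw [hAc]; ring
      · have e : i + q * (j + 1) = (i + q * j) + q := by ring
        calc B ^ d ^ (i + q * (j + 1)) = (B ^ d ^ (i + q * j)) ^ d ^ q := by
              rw [e, pow_add, pow_mul]
          _ = cj ^ d ^ q * (B ^ d ^ i) ^ d ^ q := by rw [hBj, mul_pow]
          _ = cj ^ d ^ q * B ^ d ^ (i + q) := by rw [← pow_mul, ← pow_add]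
          _ = cj ^ d ^ q * c * B ^ d ^ i := by rw [hBc]; ring
  have onV : ∀ j : ℕ, A ^ d ^ i * (α ^ d ^ (i + r + q * j)) ^ k
      = B ^ d ^ i * (β ^ d ^ (i + r + q * j)) ^ l := by
    intro j
    obtain ⟨cj, hcj0, hAj, hBj⟩ := hcj j
    have e : i + r + q * j = r + (i + q * j) := by ring
    have hpow : (A * (α ^ d ^ r) ^ k) ^ d ^ (i + q * j)
        = (B * (β ^ d ^ r) ^ l) ^ d ^ (i + q * j) := by rw [key]
    have hα' : (α ^ d ^ (i + r + q * j)) ^ k = ((α ^ d ^ r) ^ k) ^ d ^ (i + q * j) := by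
      rw [e, pow_add]; simp only [← pow_mul]; congr 1; ring
    have hβ' : (β ^ d ^ (i + r + q * j)) ^ l = ((β ^ d ^ r) ^ l) ^ d ^ (i + q * j) := by
      rw [e, pow_add]; simp only [← pow_mul]; congr 1; ring
    have main : cj * (A ^ d ^ i * (α ^ d ^ (i + r + q * j)) ^ k)
        = cj * (B ^ d ^ i * (β ^ d ^ (i + r + q * j)) ^ l) := by
      calc cj * (A ^ d ^ i * (α ^ d ^ (i + r + q * j)) ^ k)
          = A ^ d ^ (i + q * j) * ((α ^ d ^ r) ^ k) ^ d ^ (i + q * j) := by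
            rw [hAj, hα']; ring
        _ = (A * (α ^ d ^ r) ^ k) ^ d ^ (i + q * j) := by rw [mul_pow]
        _ = (B * (β ^ d ^ r) ^ l) ^ d ^ (i + q * j) := hpow
        _ = B ^ d ^ (i + q * j) * ((β ^ d ^ r) ^ l) ^ d ^ (i + q * j) := by rw [mul_pow]
        _ = cj * (B ^ d ^ i * (β ^ d ^ (i + r + q * j)) ^ l) := by rw [hBj, hβ']; ring
    exact mul_left_cancel₀ hcj0 main
  refine ⟨onV, ?_⟩
  intro hno
  apply Set.infinite_of_injective_forall_mem
    (f := fun j : ℕ => ((α ^ d ^ (i + r + q * j), β ^ d ^ (i + r + q * j)) : K × K))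
  · intro j₁ j₂ hjeq
    by_contra hne
    rcases Nat.lt_or_ge j₁ j₂ with h | h
    · exact hno ⟨i + r + q * j₁, i + r + q * j₂, by
        have : q * j₁ < q * j₂ := mul_lt_mul_of_pos_left h (by omega : 0 < q)
        omega, hjeq.symm⟩
    · have h' : j₂ < j₁ := lt_of_le_of_ne h (Ne.symm (by exact fun hh => hne hh))
      exact hno ⟨i + r + q * j₂, i + r + q * j₁, by
        have : q * j₂ < q * j₁ := mul_lt_mul_of_pos_left h' (by omega : 0 < q)
        omega, hjeq⟩
  · intro j
    exact ⟨⟨i + r + q * j, rfl⟩, onV j⟩
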